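/- Let (g, γ) be an n-Lie bialgebra. Then the 1-cocycle condition on γ is equivalent to the identity: for all ξ_1,...,ξ_n ∈ g*, x_1,...,x_n ∈ g, ⟨[ξ_1,...,ξ_n]_{g*}, [x_1,...,x_n]⟩ = Σ_{i,j=1}^n (−1)^{i+j−1} ⟨[ξ_1,...,ξ_{i−1},ξ_{i+1},...,ξ_n, ad*_{x_1,...,x̂_j,...,x_n}(ξ_i)]_{g*}, x_j⟩. -/

import Mathlib

open scoped TensorProduct

noncomputable section

variable {K V : Type*} [Field K] [CharZero K] [AddCommGroup V] [Module K V]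

/-- `ad_{x₁,…,x_{n-1}} : V → V`, `y ↦ [x₁,…,x_{n-1},y]`. -/
def adMap {m : ℕ} (b : MultilinearMap K (fun _ : Fin (m + 1) => V) V)
    (X : Fin m → V) : V →ₗ[K] V := b.curryRight X

/-- The coadjoint action `ad*`: `⟨ad*_X ξ, x⟩ = −⟨ξ, [X, x]⟩`. -/
def coad {m : ℕ} (b : MultilinearMap K (fun _ : Fin (m + 1) => V) V)
    (X : Fin m → V) : Module.Dual K V →ₗ[K] Module.Dual K V := -(adMap b X).dualMap

/-- The diagonal (adjoint) action `ad^{(p)}` on `⊗^p V`. -/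
def adP {m : ℕ} (b : MultilinearMap K (fun _ : Fin (m + 1) => V) V) (p : ℕ)
    (X : Fin m → V) : (⨂[K] _ : Fin p, V) →ₗ[K] (⨂[K] _ : Fin p, V) :=
  ∑ i : Fin p, PiTensorProduct.map (Function.update (fun _ => LinearMap.id) i (adMap b X))

/-- Pairing of `⊗ⁿ V` with an `n`-tuple of functionals. -/
def pairV {n : ℕ} (ξ : Fin n → Module.Dual K V) : (⨂[K] _ : Fin n, V) →ₗ[K] K :=
  PiTensorProduct.lift ((MultilinearMap.mkPiAlgebra K (Fin n) K).compLinearMap ξ)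

section Aux
variable {K V : Type*} [Field K] [AddCommGroup V] [Module K V]
open PiTensorProduct Module

lemma pairV_tprod {n : ℕ} (ξ : Fin n → Module.Dual K V) (v : Fin n → V) :
    pairV ξ (PiTensorProduct.tprod K v) = ∏ k, ξ k (v k) := by
  simp [pairV]

/-- Contraction of the last tensor factor against a functional. -/
def contractLast {n : ℕ} (φ : Module.Dual K V) :
    (⨂[K] _ : Fin (n + 1), V) →ₗ[K] (⨂[K] _ : Fin n, V) :=
  PiTensorProduct.lift <| MultilinearMap.uncurryRight <|
    ({ toFun := fun w => φ.smulRight w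
       map_add' := fun w w' => by ext v; simp
       map_smul' := fun a w => by
         ext v
         simp only [LinearMap.smulRight_apply, LinearMap.smul_apply, RingHom.id_apply]
         rw [smul_comm] } :
      (⨂[K] _ : Fin n, V) →ₗ[K] (V →ₗ[K] ⨂[K] _ : Fin n, V)).compMultilinearMap
      (PiTensorProduct.tprod K)

@[simp] lemma contractLast_tprod {n : ℕ} (φ : Module.Dual K V) (v : Fin (n + 1) → V) :
    contractLast φ (PiTensorProduct.tprod K v)
      = φ (v (Fin.last n)) • PiTensorProduct.tprod K (Fin.init v) := by
  simp [contractLast, MultilinearMap.uncurryRight_apply]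

lemma pairV_snoc {n : ℕ} (ξ : Fin n → Module.Dual K V) (φ : Module.Dual K V)
    (t : ⨂[K] _ : Fin (n + 1), V) :
    pairV (Fin.snoc ξ φ) t = pairV ξ (contractLast φ t) := by
  have : (pairV (Fin.snoc ξ φ) : (⨂[K] _ : Fin (n+1), V) →ₗ[K] K)
      = (pairV ξ).comp (contractLast φ) := by
    ext v
    simp [pairV_tprod, Fin.prod_univ_castSucc, Fin.init, mul_comm]
  rw [this]; rfl

/-- Append a fixed vector as last tensor factor. -/
def appendLast {n : ℕ} (w : V) :
    (⨂[K] _ : Fin n, V) →ₗ[K] (⨂[K] _ : Fin (n + 1), V) :=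
  PiTensorProduct.lift <|
    (LinearMap.applyₗ w).compMultilinearMap
      (PiTensorProduct.tprod K (s := fun _ : Fin (n+1) => V)).curryRight

@[simp] lemma appendLast_tprod {n : ℕ} (w : V) (v : Fin n → V) :
    appendLast w (PiTensorProduct.tprod K v) = PiTensorProduct.tprod K (Fin.snoc v w) := by
  rw [appendLast, PiTensorProduct.lift.tprod]
  rfl

lemma pairV_sep [FiniteDimensional K V] : ∀ {n : ℕ} (t : ⨂[K] _ : Fin n, V),
    (∀ ξ : Fin n → Module.Dual K V, pairV ξ t = 0) → t = 0 := by
  intro n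
  induction n with
  | zero =>
    intro t h
    have he : ((PiTensorProduct.isEmptyEquiv (R := K) (s := fun _ : Fin 0 => V)
        (Fin 0)) : (⨂[K] _ : Fin 0, V) →ₗ[K] K)
        = pairV (finZeroElim : Fin 0 → Module.Dual K V) := by
      ext v
      simp [pairV_tprod]
    refine (LinearEquiv.map_eq_zero_iff (PiTensorProduct.isEmptyEquiv (R := K)
      (s := fun _ : Fin 0 => V) (Fin 0))).mp ?_
    rw [show ((PiTensorProduct.isEmptyEquiv (R := K) (s := fun _ : Fin 0 => V) (Fin 0)) t
      = pairV (finZeroElim : Fin 0 → Module.Dual K V) t) from DFunLike.congr_fun he t]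
    exact h _
  | succ n ih =>
    intro t h
    set B := Module.finBasis K V with hB
    have hc : ∀ j, contractLast (B.coord j) t = 0 := fun j =>
      ih _ (fun ξ' => by rw [← pairV_snoc]; exact h _)
    have hrec : (∑ j, (appendLast (B j)).comp (contractLast (B.coord j)))
        = (LinearMap.id : (⨂[K] _ : Fin (n+1), V) →ₗ[K] _) := by
      ext v
      simp only [LinearMap.compMultilinearMap_apply, LinearMap.sum_apply, LinearMap.comp_apply,
        contractLast_tprod, map_smul, appendLast_tprod, LinearMap.id_apply]
      have key : ∀ z : V, PiTensorProduct.tprod K (Fin.snoc (Fin.init v) z)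
          = ((PiTensorProduct.tprod K (s := fun _ : Fin (n+1) => V)).toLinearMap v
            (Fin.last n)) z := by
        intro z
        show _ = PiTensorProduct.tprod K (Function.update v (Fin.last n) z)
        congr 1
        conv_rhs => rw [← Fin.snoc_init_self v, Fin.update_snoc_last]
      simp_rw [key, ← map_smul, ← map_sum, Basis.coord_apply]
      rw [show (∑ j, (B.repr (v (Fin.last n))) j • B j) = v (Fin.last n) from B.sum_repr _]
      show PiTensorProduct.tprod K (Function.update v (Fin.last n) (v (Fin.last n))) = _
      rw [Function.update_eq_self]
    have := DFunLike.congr_fun hrec t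
    simp only [LinearMap.sum_apply, LinearMap.comp_apply, LinearMap.id_apply] at this
    rw [← this]
    simp [hc]

end Aux

section Aux2
variable {K V : Type*} [Field K] [AddCommGroup V] [Module K V]
open PiTensorProduct Module

lemma pairV_adP {m : ℕ} (b : MultilinearMap K (fun _ : Fin (m + 1) => V) V)
    (X : Fin m → V) (ξ : Fin (m + 1) → Module.Dual K V) (t : ⨂[K] _ : Fin (m + 1), V) :
    pairV ξ (adP b (m + 1) X t)
      = - ∑ k : Fin (m + 1), pairV (Function.update ξ k (coad b X (ξ k))) t := by
  have hmap : (pairV ξ).comp (adP b (m + 1) X)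
      = - ∑ k : Fin (m + 1), pairV (Function.update ξ k (coad b X (ξ k))) := by
    ext v
    have h1 : ∀ p : Fin (m + 1),
        (fun l => Function.update (fun _ : Fin (m + 1) => (LinearMap.id : V →ₗ[K] V)) p
          (adMap b X) l (v l)) = Function.update v p (adMap b X (v p)) := by
      intro p; funext l
      rcases eq_or_ne l p with rfl | h
      · simp
      · simp [Function.update_of_ne h]
    have h2 : ∀ (p : Fin (m + 1)) (a : V),
        (∏ l, ξ l (Function.update v p a l))
          = ξ p a * ∏ l ∈ Finset.univ \ {p}, ξ l (v l) := by
      intro p a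
      rw [show (fun l => ξ l (Function.update v p a l))
          = Function.update (fun l => ξ l (v l)) p (ξ p a) from ?_]
      · exact Finset.prod_update_of_mem (Finset.mem_univ p) _ _
      · funext l
        rcases eq_or_ne l p with rfl | h
        · simp
        · simp [Function.update_of_ne h]
    have h3 : ∀ k : Fin (m + 1),
        (∏ l, (Function.update ξ k (coad b X (ξ k))) l (v l))
          = -(ξ k (adMap b X (v k)) * ∏ l ∈ Finset.univ \ {k}, ξ l (v l)) := by
      intro k
      rw [show (fun l => (Function.update ξ k (coad b X (ξ k))) l (v l))
          = Function.update (fun l => ξ l (v l)) k ((coad b X (ξ k)) (v k)) from ?_]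
      · rw [Finset.prod_update_of_mem (Finset.mem_univ k)]
        simp [coad, neg_mul]
      · funext l
        rcases eq_or_ne l k with rfl | h
        · simp
        · simp [Function.update_of_ne h]
    simp only [LinearMap.compMultilinearMap_apply, LinearMap.comp_apply, adP,
      LinearMap.sum_apply, map_sum, PiTensorProduct.map_tprod, LinearMap.neg_apply]
    simp only [h1, pairV_tprod, h2, h3, Finset.sum_neg_distrib, neg_neg]
  simpa using DFunLike.congr_fun hmap t

lemma alt_snoc_succAbove {m : ℕ}
    (c : MultilinearMap K (fun _ : Fin (m + 1) => Module.Dual K V) (Module.Dual K V))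
    (caltern : ∀ (ξ : Fin (m + 1) → Module.Dual K V) (i j : Fin (m + 1)),
      i ≠ j → ξ i = ξ j → c ξ = 0)
    (ξ : Fin (m + 1) → Module.Dual K V) (i : Fin (m + 1)) (η : Module.Dual K V) :
    c (Fin.snoc (ξ ∘ i.succAbove) η)
      = ((-1 : K) ^ (m - (i : ℕ))) • c (Function.update ξ i η) := by
  let cA : (Module.Dual K V) [⋀^Fin (m + 1)]→ₗ[K] (Module.Dual K V) :=
    { toMultilinearMap := c
      map_eq_zero_of_eq' := fun v i j hv hij => caltern v i j hij hv }
  let σ : Equiv.Perm (Fin (m + 1)) :=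
    Fin.revPerm.trans (((i.rev.cycleRange).symm).trans Fin.revPerm)
  have hσapp : ∀ k, σ k = Fin.rev ((i.rev.cycleRange).symm (Fin.rev k)) := fun _ => rfl
  have hlast : σ (Fin.last m) = i := by
    rw [hσapp, Fin.rev_last, Fin.cycleRange_symm_zero, Fin.rev_rev]
  have hcast : ∀ k' : Fin m, σ (Fin.castSucc k') = i.succAbove k' := by
    intro k'
    rw [hσapp, Fin.rev_castSucc, Fin.cycleRange_symm_succ, ← Fin.rev_succAbove, Fin.rev_rev]
  have hσ : (Function.update ξ i η) ∘ σ = Fin.snoc (ξ ∘ i.succAbove) η := by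
    funext k
    induction k using Fin.lastCases with
    | last =>
      simp only [Function.comp_apply, Fin.snoc_last]
      rw [hlast, Function.update_self]
    | cast k' =>
      simp only [Function.comp_apply, Fin.snoc_castSucc]
      rw [hcast]
      exact Function.update_of_ne (Fin.succAbove_ne i k') _ _
  have hperm := cA.map_perm (Function.update ξ i η) σ
  rw [hσ] at hperm
  have hval : ((i.rev : Fin (m + 1)) : ℕ) = m - (i : ℕ) := by
    have := Fin.val_rev i
    omega
  have hsign : Equiv.Perm.sign σ = (-1 : ℤˣ) ^ (m - (i : ℕ)) := by
    have h1 : σ = (Fin.revPerm * (i.rev.cycleRange).symm) * Fin.revPerm := rfl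
    rw [h1, Equiv.Perm.sign_mul, Equiv.Perm.sign_mul, Equiv.Perm.sign_symm,
      Fin.sign_cycleRange, hval]
    rw [mul_comm (Equiv.Perm.sign Fin.revPerm) _, mul_assoc, Int.units_mul_self, mul_one]
  have husmul : ∀ (e : ℕ) (φ : Module.Dual K V),
      ((-1 : ℤˣ) ^ e) • φ = ((-1 : K) ^ e) • φ := by
    intro e φ
    rcases Nat.even_or_odd e with he | he
    · rw [he.neg_one_pow, he.neg_one_pow, one_smul, one_smul]
    · rw [he.neg_one_pow, he.neg_one_pow, Units.smul_def]
      simp only [Units.val_neg, Units.val_one, neg_zsmul, one_zsmul]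
      exact (neg_one_smul K φ).symm
  calc c (Fin.snoc (ξ ∘ i.succAbove) η) = cA (Fin.snoc (ξ ∘ i.succAbove) η) := rfl
  _ = Equiv.Perm.sign σ • cA (Function.update ξ i η) := hperm
  _ = ((-1 : ℤˣ) ^ (m - (i : ℕ))) • cA (Function.update ξ i η) := by rw [hsign]
  _ = ((-1 : K) ^ (m - (i : ℕ))) • c (Function.update ξ i η) := husmul _ _

end Aux2

section Aux3
variable {K V : Type*} [Field K] [AddCommGroup V] [Module K V]
open PiTensorProduct Module

lemma neg_one_pow_congr' {K : Type*} [Field K] {e f : ℕ} (h : e % 2 = f % 2) :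
    ((-1 : K)) ^ e = (-1) ^ f := by
  rcases Nat.even_or_odd e with he | he
  · have hf : Even f := Nat.even_iff.mpr (by rw [← h]; exact Nat.even_iff.mp he)
    rw [he.neg_one_pow, hf.neg_one_pow]
  · have hf : Odd f := Nat.odd_iff.mpr (by rw [← h]; exact Nat.odd_iff.mp he)
    rw [he.neg_one_pow, hf.neg_one_pow]

lemma pairD {m : ℕ}
    (b : MultilinearMap K (fun _ : Fin (m + 1) => V) V)
    (c : MultilinearMap K (fun _ : Fin (m + 1) => Module.Dual K V) (Module.Dual K V))
    (caltern : ∀ (ξ : Fin (m + 1) → Module.Dual K V) (i j : Fin (m + 1)),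
      i ≠ j → ξ i = ξ j → c ξ = 0)
    (γ : V →ₗ[K] ⨂[K] _ : Fin (m + 1), V)
    (hcompat : ∀ (ξ : Fin (m + 1) → Module.Dual K V) (x : V), c ξ x = pairV ξ (γ x))
    (ξ : Fin (m + 1) → Module.Dual K V) (x : Fin (m + 1) → V) :
    pairV ξ (∑ i : Fin (m + 1), ((-1 : K) ^ (m - (i : ℕ))) •
        adP b (m + 1) (x ∘ i.succAbove) (γ (x i)))
      = ∑ i : Fin (m + 1), ∑ j : Fin (m + 1),
        (-1 : K) ^ ((i : ℕ) + (j : ℕ) + 1) *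
          c (Fin.snoc (ξ ∘ i.succAbove) (coad b (x ∘ j.succAbove) (ξ i))) (x j) := by
  have hsc : ∀ (a bb : ℕ), a ≤ m → bb ≤ m → ∀ C : K,
      -((-1 : K) ^ (m - a) * C) = (-1 : K) ^ (bb + a + 1) * ((-1 : K) ^ (m - bb) * C) := by
    intro a bb ha hb C
    rw [← mul_assoc, ← pow_add,
      neg_one_pow_congr' (K := K) (show (bb + a + 1 + (m - bb)) % 2 = (m - a + 1) % 2 by omega),
      pow_succ]
    ring
  have step1 : ∀ i : Fin (m + 1),
      pairV ξ (((-1 : K) ^ (m - (i : ℕ))) • adP b (m + 1) (x ∘ i.succAbove) (γ (x i)))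
        = ∑ k : Fin (m + 1), (-1 : K) ^ ((k : ℕ) + (i : ℕ) + 1) *
            c (Fin.snoc (ξ ∘ k.succAbove) (coad b (x ∘ i.succAbove) (ξ k))) (x i) := by
    intro i
    rw [map_smul, smul_eq_mul, pairV_adP, mul_neg, Finset.mul_sum, ← Finset.sum_neg_distrib]
    refine Finset.sum_congr rfl fun k _ => ?_
    rw [← hcompat, alt_snoc_succAbove c caltern ξ k (coad b (x ∘ i.succAbove) (ξ k)),
      LinearMap.smul_apply, smul_eq_mul]
    exact hsc (i : ℕ) (k : ℕ) (Nat.lt_succ_iff.mp i.isLt) (Nat.lt_succ_iff.mp k.isLt) _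
  rw [map_sum, Finset.sum_congr rfl (fun i _ => step1 i)]
  exact Finset.sum_comm

end Aux3
/-- For an `n`-Lie bialgebra (`n = m+1`), the 1-cocycle condition on `γ` is
equivalent to: `⟨[ξ₁,…,ξₙ]_{g*}, [x₁,…,xₙ]⟩ = Σ_{i,j} (−1)^{i+j−1}
⟨[ξ₁,…,ξ̂ᵢ,…,ξₙ, ad*_{x̂ⱼ}(ξᵢ)]_{g*}, xⱼ⟩`. -/
theorem cocycle_iff_pairing_identity {m : ℕ} [FiniteDimensional K V]
    (b : MultilinearMap K (fun _ : Fin (m + 1) => V) V)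
    (halt : ∀ (v : Fin (m + 1) → V) (i j : Fin (m + 1)), i ≠ j → v i = v j → b v = 0)
    (hFJ : ∀ (x : Fin m → V) (y : Fin (m + 1) → V),
      b (Fin.snoc x (b y)) = ∑ i, b (Function.update y i (b (Fin.snoc x (y i)))))
    (c : MultilinearMap K (fun _ : Fin (m + 1) => Module.Dual K V) (Module.Dual K V))
    (caltern : ∀ (ξ : Fin (m + 1) → Module.Dual K V) (i j : Fin (m + 1)),
      i ≠ j → ξ i = ξ j → c ξ = 0)
    (cFJ : ∀ (ξ : Fin m → Module.Dual K V) (η : Fin (m + 1) → Module.Dual K V),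
      c (Fin.snoc ξ (c η)) = ∑ i, c (Function.update η i (c (Fin.snoc ξ (η i)))))
    (γ : V →ₗ[K] ⨂[K] _ : Fin (m + 1), V)
    (hcompat : ∀ (ξ : Fin (m + 1) → Module.Dual K V) (x : V), c ξ x = pairV ξ (γ x)) :
    (∀ x : Fin (m + 1) → V,
      γ (b x) = ∑ i : Fin (m + 1), ((-1 : K) ^ (m - (i : ℕ))) •
        adP b (m + 1) (x ∘ i.succAbove) (γ (x i))) ↔
    (∀ (ξ : Fin (m + 1) → Module.Dual K V) (x : Fin (m + 1) → V),
      c ξ (b x) = ∑ i : Fin (m + 1), ∑ j : Fin (m + 1),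
        (-1 : K) ^ ((i : ℕ) + (j : ℕ) + 1) *
          c (Fin.snoc (ξ ∘ i.succAbove) (coad b (x ∘ j.succAbove) (ξ i))) (x j)) := by
  constructor
  · intro H ξ x
    rw [hcompat, H x, pairD b c caltern γ hcompat ξ x]
  · intro P x
    have hz : ∀ ξ : Fin (m + 1) → Module.Dual K V,
        pairV ξ (γ (b x) - ∑ i : Fin (m + 1), ((-1 : K) ^ (m - (i : ℕ))) •
          adP b (m + 1) (x ∘ i.succAbove) (γ (x i))) = 0 := by
      intro ξ
      rw [map_sub, pairD b c caltern γ hcompat ξ x, ← hcompat, P]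
      exact sub_self _
    exact sub_eq_zero.mp (pairV_sep _ hz)
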